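/- Let p and q be positive integers and suppose the group G_{p,q} admits no generalized torsion elements. Then there is a group isomorphism from H_{p,q} to G_{p,q} sending τ to t and sending x_n to t^{n} b t^{-n} for every integer n (in particular x_0 is sent to b). -/

import Mathlib

/-- The set of conjugates `h⁻¹ * g * h` of an element `g` of a group. -/
def conjSet {G : Type*} [Group G] (g : G) : Set G := {x | ∃ h : G, x = h⁻¹ * g * h}

/-- `<<g>>^+`: the subsemigroup generated by all conjugates of `g`. -/
def ggP {G : Type*} [Group G] (g : G) : Subsemigroup G := Subsemigroup.closure (conjSet g)

/-- A generalized torsion element: a nontrivial element `g` with `1 ∈ <<g>>^+`. -/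
def IsGenTorsionElem {G : Type*} [Group G] (g : G) : Prop := g ≠ 1 ∧ (1 : G) ∈ ggP g

/-- `G` admits a generalized torsion element. -/
def HasGenTorsion (G : Type*) [Group G] : Prop := ∃ g : G, IsGenTorsionElem g

/-- The relators of the presentation
`< a, b, t | t a^p t⁻¹ = b⁻¹ a^p, t b^{-q} a⁻¹ t⁻¹ = b^{-q}, [b^q, a^p] = 1 >`,
where `a`, `b`, `t` are the generators `0`, `1`, `2` respectively, and
`[g,h] = g⁻¹ h⁻¹ g h`. -/
def gpqRels (p q : ℤ) : Set (FreeGroup (Fin 3)) :=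
  let a : FreeGroup (Fin 3) := FreeGroup.of 0
  let b : FreeGroup (Fin 3) := FreeGroup.of 1
  let t : FreeGroup (Fin 3) := FreeGroup.of 2
  { t * a ^ p * t⁻¹ * (b⁻¹ * a ^ p)⁻¹,
    t * b ^ (-q) * a⁻¹ * t⁻¹ * (b ^ (-q))⁻¹,
    (b ^ q)⁻¹ * (a ^ p)⁻¹ * b ^ q * a ^ p }

/-- `G_{p,q}`, the fundamental group of the 3-manifold obtained by 0-surgery along the
double twist knot `K_{p,q}`. -/
abbrev Gpq (p q : ℤ) := PresentedGroup (gpqRels p q)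

/-- The relators of the presentation
`< τ, x_n (n ∈ ℤ) | [x_i, x_j] = 1, x_{i+1}^{pq} x_i^{-(2pq+1)} x_{i-1}^{pq} = 1,
τ x_i τ⁻¹ = x_{i+1} >`, where `τ` is the generator `Sum.inl ()` and `x_n` is the
generator `Sum.inr n`. -/
def hpqRels (p q : ℤ) : Set (FreeGroup (Unit ⊕ ℤ)) :=
  let τ : FreeGroup (Unit ⊕ ℤ) := FreeGroup.of (Sum.inl ())
  let X : ℤ → FreeGroup (Unit ⊕ ℤ) := fun n => FreeGroup.of (Sum.inr n)
  (⋃ i : ℤ, ⋃ j : ℤ, {(X i)⁻¹ * (X j)⁻¹ * X i * X j}) ∪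
    (⋃ i : ℤ, {(X (i + 1)) ^ (p * q) * (X i) ^ (-(2 * p * q + 1)) * (X (i - 1)) ^ (p * q)}) ∪
    (⋃ i : ℤ, {τ * X i * τ⁻¹ * (X (i + 1))⁻¹})

/-- The group `H_{p,q}`. -/
abbrev Hpq (p q : ℤ) := PresentedGroup (hpqRels p q)

/-!
Without generalized torsion, `[g, h^n] = 1` with `n ≠ 0` forces `[g, h] = 1`, because
`[g, h^n]` is a product of conjugates of `[g, h]`. Applied to the defining relations of `G_{p,q}`,
rewritten for the conjugates `x_i = t^i b t^{-i}` and `a_i = t^i a t^{-i}` as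
`a_{i+1} = x_i^q x_{i+1}^{-q}`, `x_i = a_i^p a_{i+1}^{-p}` and `[x_i^q, a_i^p] = 1`, this gives
first `[x_i, a_i] = 1`, then `[x_i, x_{i+1}] = 1`, then the recurrence
`x_i^{pq} = x_{i+1}^{2pq+1} x_{i+2}^{-pq}`, and finally, by induction on `j - i`, that all the `x_i`
commute: `x_j` commutes with `x_{i+1}, x_{i+2}`, hence with `x_i^{pq}`, hence with `x_i`.
So `τ ↦ t`, `x_i ↦ x_i` respects the relations of `H_{p,q}`; the inverse sends `t ↦ τ`, `b ↦ x_0`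
and `a ↦ x_{-1}^q x_0^{-q}`.
-/

open scoped commutatorElement

section GeneralizedTorsion

variable {G : Type*} [Group G]

theorem conj_mem_ggP {c x : G} (hx : x ∈ ggP c) (k : G) : k⁻¹ * x * k ∈ ggP c := by
  induction hx using Subsemigroup.closure_induction with
  | mem y hy =>
    obtain ⟨h, rfl⟩ := hy
    exact Subsemigroup.subset_closure ⟨h * k, by group⟩
  | mul y z _ _ hy hz =>
    have e : k⁻¹ * (y * z) * k = (k⁻¹ * y * k) * (k⁻¹ * z * k) := by group
    rw [e]
    exact mul_mem hy hz

theorem commutatorElement_pow_mem_ggP (g h : G) {n : ℕ} (hn : n ≠ 0) :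
    ⁅g, h ^ n⁆ ∈ ggP ⁅g, h⁆ := by
  have self_mem : ⁅g, h⁆ ∈ ggP ⁅g, h⁆ := Subsemigroup.subset_closure ⟨1, by group⟩
  obtain ⟨n, rfl⟩ := Nat.exists_eq_succ_of_ne_zero hn
  induction n with
  | zero => simpa using self_mem
  | succ n ih =>
    have e : ⁅g, h ^ (n + 2)⁆ =
        ⁅g, h ^ (n + 1)⁆ * ((h ^ (n + 1))⁻¹⁻¹ * ⁅g, h⁆ * (h ^ (n + 1))⁻¹) := by
      simp only [commutatorElement_def, pow_succ]
      group
    rw [e]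
    exact mul_mem (ih n.succ_ne_zero) (conj_mem_ggP self_mem _)

section

variable (hG : ¬ HasGenTorsion G)
include hG

theorem Commute.of_pow_right_of_not_hasGenTorsion {g h : G} {n : ℕ} (hn : n ≠ 0)
    (hc : Commute g (h ^ n)) : Commute g h := by
  by_contra hgh
  refine hG ⟨⁅g, h⁆, mt commutatorElement_eq_one_iff_commute.mp hgh, ?_⟩
  rw [← commutatorElement_eq_one_iff_commute.mpr hc]
  exact commutatorElement_pow_mem_ggP g h hn

theorem Commute.of_zpow_right_of_not_hasGenTorsion {g h : G} {n : ℤ} (hn : n ≠ 0)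
    (hc : Commute g (h ^ n)) : Commute g h := by
  refine .of_pow_right_of_not_hasGenTorsion hG (Int.natAbs_ne_zero.mpr hn) ?_
  rcases Int.natAbs_eq n with e | e
  · rwa [e, zpow_natCast] at hc
  · rwa [e, zpow_neg, zpow_natCast, Commute.inv_right_iff] at hc

theorem Commute.of_zpow_zpow_of_not_hasGenTorsion {g h : G} {m n : ℤ} (hm : m ≠ 0)
    (hn : n ≠ 0) (hc : Commute (g ^ m) (h ^ n)) : Commute g h :=
  (((hc.of_zpow_right_of_not_hasGenTorsion hG hn).symm).of_zpow_right_of_not_hasGenTorsion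
    hG hm).symm

theorem commute_of_zpow_eq_mul_of_not_hasGenTorsion (x : ℤ → G) {N m n : ℤ} (hN : N ≠ 0)
    (hadj : ∀ i, Commute (x i) (x (i + 1)))
    (hrec : ∀ i, x i ^ N = x (i + 1) ^ m * x (i + 2) ^ n) (i j : ℤ) :
    Commute (x i) (x j) := by
  have key : ∀ k : ℕ, ∀ i, Commute (x (i + k)) (x i) := by
    intro k
    induction k using Nat.twoStepInduction with
    | zero => simp
    | one => exact fun i => by simpa using (hadj i).symm
    | more k ih₀ ih₁ =>
      intro i
      have h₁ : Commute (x (i + ↑(k + 2))) (x (i + 1)) := by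
        convert ih₁ (i + 1) using 2; push_cast; ring
      have h₂ : Commute (x (i + ↑(k + 2))) (x (i + 2)) := by
        convert ih₀ (i + 2) using 2; push_cast; ring
      refine .of_zpow_right_of_not_hasGenTorsion hG hN ?_
      rw [hrec]
      exact (h₁.zpow_right m).mul_right (h₂.zpow_right n)
  rcases le_total i j with h | h
  · obtain ⟨k, rfl⟩ := Int.le.dest h
    exact (key k i).symm
  · obtain ⟨k, rfl⟩ := Int.le.dest h
    exact key k j

end

end GeneralizedTorsion

theorem Commute.zpow_mul_zpow_neg_zpow {G : Type*} [Group G] {g h : G} (hc : Commute g h)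
    (m n : ℤ) :
    (g ^ m * h ^ (-m)) ^ n = g ^ (n * m) * h ^ (-(n * m)) := by
  rw [(hc.zpow_zpow _ _).mul_zpow, ← zpow_mul', ← zpow_mul', mul_neg]

theorem MonoidHom.map_mulAut_conj_zpow_apply {G H : Type*} [Group G] [Group H] (f : G →* H)
    (g h : G) (n : ℤ) : f ((MulAut.conj g ^ n) h) = (MulAut.conj (f g) ^ n) (f h) := by
  rw [← map_zpow, ← map_zpow, MulAut.conj_apply, MulAut.conj_apply, map_mul, map_mul, map_inv,
    map_zpow]

namespace Gpq

variable (p q : ℤ)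

def a : Gpq p q := PresentedGroup.of 0

def b : Gpq p q := PresentedGroup.of 1

def t : Gpq p q := PresentedGroup.of 2

theorem lift_eq_one_of_rels {K : Type*} [Group K] {A B T : K}
    (h₁ : T * A ^ p * T⁻¹ = B⁻¹ * A ^ p) (h₂ : T * B ^ (-q) * A⁻¹ * T⁻¹ = B ^ (-q))
    (h₃ : Commute (B ^ q) (A ^ p)) :
    ∀ r ∈ gpqRels p q, FreeGroup.lift ![A, B, T] r = 1 := by
  intro r hr
  simp only [gpqRels, Set.mem_insert_iff, Set.mem_singleton_iff] at hr
  rcases hr with rfl | rfl | rfl <;>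
    simp only [map_mul, map_zpow, map_inv, FreeGroup.lift_apply_of, Matrix.cons_val]
  · rw [h₁, mul_inv_cancel]
  · rw [h₂, mul_inv_cancel]
  · simpa [commutatorElement_def] using
      commutatorElement_eq_one_iff_commute.mpr (Commute.inv_inv_iff.mpr h₃)

theorem t_mul_a_zpow_mul_t_inv : t p q * a p q ^ p * (t p q)⁻¹ = (b p q)⁻¹ * a p q ^ p :=
  PresentedGroup.mk_eq_mk_of_mul_inv_mem (Set.mem_insert _ _)

theorem t_mul_b_zpow_mul_a_inv_mul_t_inv :
    t p q * b p q ^ (-q) * (a p q)⁻¹ * (t p q)⁻¹ = b p q ^ (-q) :=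
  PresentedGroup.mk_eq_mk_of_mul_inv_mem (Set.mem_insert_of_mem _ (Set.mem_insert _ _))

theorem commute_b_zpow_a_zpow : Commute (b p q ^ q) (a p q ^ p) := by
  rw [← Commute.inv_inv_iff, ← commutatorElement_eq_one_iff_commute, commutatorElement_def,
    inv_inv, inv_inv]
  exact PresentedGroup.one_of_mem (Set.mem_insert_of_mem _ (Set.mem_insert_of_mem _ rfl))

def aConj (i : ℤ) : Gpq p q := (MulAut.conj (t p q) ^ i) (a p q)

def bConj (i : ℤ) : Gpq p q := (MulAut.conj (t p q) ^ i) (b p q)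

theorem bConj_eq_zpow_mul_mul_zpow_neg (i : ℤ) :
    bConj p q i = t p q ^ i * b p q * t p q ^ (-i) := by
  rw [bConj, ← map_zpow, MulAut.conj_apply, zpow_neg]

theorem conj_zpow_aConj (i j : ℤ) :
    (MulAut.conj (t p q) ^ i) (aConj p q j) = aConj p q (i + j) := by
  rw [aConj, aConj, zpow_add, MulAut.mul_apply]

theorem conj_zpow_bConj (i j : ℤ) :
    (MulAut.conj (t p q) ^ i) (bConj p q j) = bConj p q (i + j) := by
  rw [bConj, bConj, zpow_add, MulAut.mul_apply]

theorem aConj_zero : aConj p q 0 = a p q := by simp [aConj]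

theorem bConj_zero : bConj p q 0 = b p q := by simp [bConj]

theorem bConj_eq_aConj_zpow_mul (i : ℤ) :
    bConj p q i = aConj p q i ^ p * aConj p q (i + 1) ^ (-p) := by
  have base : b p q = a p q ^ p * aConj p q 1 ^ (-p) := by
    rw [aConj, zpow_one, zpow_neg, ← map_zpow, MulAut.conj_apply, t_mul_a_zpow_mul_t_inv]
    group
  have := congrArg (MulAut.conj (t p q) ^ i) base
  rw [map_mul, map_zpow, map_zpow, conj_zpow_aConj] at this
  exact this

theorem aConj_succ_eq_bConj_zpow_mul (i : ℤ) :
    aConj p q (i + 1) = bConj p q i ^ q * bConj p q (i + 1) ^ (-q) := by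
  have base : aConj p q 1 = b p q ^ q * bConj p q 1 ^ (-q) := by
    rw [aConj, bConj, zpow_one, ← map_zpow, MulAut.conj_apply, MulAut.conj_apply]
    calc t p q * a p q * (t p q)⁻¹
        = (t p q * b p q ^ (-q) * (a p q)⁻¹ * (t p q)⁻¹)⁻¹ *
            (t p q * b p q ^ (-q) * (t p q)⁻¹) := by
          group
      _ = b p q ^ q * (t p q * b p q ^ (-q) * (t p q)⁻¹) := by
          rw [t_mul_b_zpow_mul_a_inv_mul_t_inv, zpow_neg, inv_inv]
  have := congrArg (MulAut.conj (t p q) ^ i) base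
  rw [map_mul, map_zpow, map_zpow, conj_zpow_aConj, conj_zpow_bConj] at this
  exact this

theorem commute_bConj_zpow_aConj_zpow (i : ℤ) :
    Commute (bConj p q i ^ q) (aConj p q i ^ p) := by
  have := (commute_b_zpow_a_zpow p q).map (MulAut.conj (t p q) ^ i)
  rwa [map_zpow, map_zpow] at this

theorem t_mul_bConj_mul_t_inv (i : ℤ) : t p q * bConj p q i * (t p q)⁻¹ = bConj p q (i + 1) := by
  rw [← MulAut.conj_apply, ← zpow_one (MulAut.conj (t p q)), conj_zpow_bConj, add_comm]

section NoGenTorsion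

variable {p q} (hG : ¬ HasGenTorsion (Gpq p q)) (hp : p ≠ 0) (hq : q ≠ 0)
include hG hp hq

theorem commute_bConj_aConj (i : ℤ) : Commute (bConj p q i) (aConj p q i) :=
  (commute_bConj_zpow_aConj_zpow p q i).of_zpow_zpow_of_not_hasGenTorsion hG hq hp

theorem commute_bConj_bConj_add_one (i : ℤ) : Commute (bConj p q i) (bConj p q (i + 1)) := by
  have h : Commute (bConj p q (i + 1)) (bConj p q i ^ q) := by
    have e : bConj p q i ^ q = aConj p q (i + 1) * bConj p q (i + 1) ^ q := by
      rw [aConj_succ_eq_bConj_zpow_mul]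
      group
    rw [e]
    exact (commute_bConj_aConj hG hp hq (i + 1)).mul_right ((Commute.refl _).zpow_right q)
  exact (h.of_zpow_right_of_not_hasGenTorsion hG hq).symm

theorem bConj_zpow_eq_mul (i : ℤ) : bConj p q i ^ (p * q) =
    bConj p q (i + 1) ^ (2 * p * q + 1) * bConj p q (i + 2) ^ (-(p * q)) := by
  have huv := commute_bConj_bConj_add_one hG hp hq i
  have hvw : Commute (bConj p q (i + 1)) (bConj p q (i + 2)) := by
    simpa [add_assoc] using commute_bConj_bConj_add_one hG hp hq (i + 1)
  have ha₁ : aConj p q (i + 1) ^ p = bConj p q i ^ (p * q) * bConj p q (i + 1) ^ (-(p * q)) := by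
    rw [aConj_succ_eq_bConj_zpow_mul, huv.zpow_mul_zpow_neg_zpow]
  have ha₂ : aConj p q (i + 2) ^ (-p) =
      bConj p q (i + 1) ^ (-(p * q)) * bConj p q (i + 2) ^ (p * q) := by
    have h := aConj_succ_eq_bConj_zpow_mul p q (i + 1)
    rw [add_assoc, one_add_one_eq_two] at h
    rw [h, hvw.zpow_mul_zpow_neg_zpow, neg_mul, neg_neg]
  have hv : bConj p q i ^ (p * q) *
      (bConj p q (i + 2) ^ (p * q) * bConj p q (i + 1) ^ (-(2 * (p * q)))) = bConj p q (i + 1) :=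
    calc _ = bConj p q i ^ (p * q) *
          (bConj p q (i + 1) ^ (-(2 * (p * q))) * bConj p q (i + 2) ^ (p * q)) := by
          rw [(hvw.zpow_zpow _ _).eq]
      _ = aConj p q (i + 1) ^ p * aConj p q (i + 2) ^ (-p) := by
          rw [ha₁, ha₂]
          group
      _ = bConj p q (i + 1) := by
          rw [bConj_eq_aConj_zpow_mul, add_assoc]
          norm_num
  rw [eq_mul_inv_of_mul_eq hv]
  group

theorem bConj_recurrence (i : ℤ) : bConj p q (i + 1) ^ (p * q) * bConj p q i ^ (-(2 * p * q + 1)) *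
    bConj p q (i - 1) ^ (p * q) = 1 := by
  have h := bConj_zpow_eq_mul hG hp hq (i - 1)
  rw [sub_add_cancel, show i - 1 + 2 = i + 1 by ring] at h
  rw [h]
  group

theorem commute_bConj (i j : ℤ) : Commute (bConj p q i) (bConj p q j) :=
  commute_of_zpow_eq_mul_of_not_hasGenTorsion hG _ (mul_ne_zero hp hq)
    (commute_bConj_bConj_add_one hG hp hq) (bConj_zpow_eq_mul hG hp hq) i j

end NoGenTorsion

end Gpq

namespace Hpq

variable (p q : ℤ)

def τ : Hpq p q := PresentedGroup.of (Sum.inl ())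

def x (n : ℤ) : Hpq p q := PresentedGroup.of (Sum.inr n)

theorem lift_eq_one_of_rels {K : Type*} [Group K] {T : K} {X : ℤ → K}
    (hcomm : ∀ i j, Commute (X i) (X j))
    (hrel : ∀ i, X (i + 1) ^ (p * q) * X i ^ (-(2 * p * q + 1)) * X (i - 1) ^ (p * q) = 1)
    (hshift : ∀ i, T * X i * T⁻¹ = X (i + 1)) :
    ∀ r ∈ hpqRels p q, FreeGroup.lift (Sum.elim (fun _ => T) X) r = 1 := by
  intro r hr
  simp only [hpqRels, Set.mem_union, Set.mem_iUnion, Set.mem_singleton_iff] at hr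
  rcases hr with (⟨i, j, rfl⟩ | ⟨i, rfl⟩) | ⟨i, rfl⟩ <;>
    simp only [map_mul, map_inv, map_zpow, FreeGroup.lift_apply_of, Sum.elim_inl, Sum.elim_inr]
  · simpa [commutatorElement_def] using
      commutatorElement_eq_one_iff_commute.mpr (Commute.inv_inv_iff.mpr (hcomm i j))
  · exact hrel i
  · rw [hshift, mul_inv_cancel]

theorem commute_x (i j : ℤ) : Commute (x p q i) (x p q j) := by
  rw [← Commute.inv_inv_iff, ← commutatorElement_eq_one_iff_commute, commutatorElement_def,
    inv_inv, inv_inv]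
  exact PresentedGroup.one_of_mem (Set.mem_union_left _ (Set.mem_union_left _
    (Set.mem_iUnion_of_mem i (Set.mem_iUnion_of_mem j rfl))))

theorem x_recurrence (i : ℤ) :
    x p q (i + 1) ^ (p * q) * x p q i ^ (-(2 * p * q + 1)) * x p q (i - 1) ^ (p * q) = 1 :=
  PresentedGroup.one_of_mem
    (Set.mem_union_left _ (Set.mem_union_right _ (Set.mem_iUnion_of_mem i rfl)))

theorem τ_mul_x_mul_τ_inv (i : ℤ) : τ p q * x p q i * (τ p q)⁻¹ = x p q (i + 1) :=
  PresentedGroup.mk_eq_mk_of_mul_inv_mem (Set.mem_union_right _ (Set.mem_iUnion_of_mem i rfl))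

theorem conj_zpow_x (n m : ℤ) : (MulAut.conj (τ p q) ^ n) (x p q m) = x p q (n + m) := by
  induction n using Int.induction_on generalizing m with
  | zero => simp
  | succ n ih =>
    rw [zpow_add_one, MulAut.mul_apply, MulAut.conj_apply, τ_mul_x_mul_τ_inv, ih]
    ring_nf
  | pred n ih =>
    have h : MulAut.conj (τ p q) (x p q (m - 1)) = x p q m := by
      rw [MulAut.conj_apply, τ_mul_x_mul_τ_inv, sub_add_cancel]
    rw [zpow_sub_one, MulAut.mul_apply, ← h, MulAut.inv_apply_self, ih]
    ring_nf

/-- The element of `H_{p,q}` corresponding to `a`: the relation `t b^{-q} a⁻¹ t⁻¹ = b^{-q}` of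
`G_{p,q}` gives `a = (t⁻¹ b t)^q b^{-q}`. -/
def a : Hpq p q := x p q (-1) ^ q * x p q 0 ^ (-q)

theorem τ_mul_a_zpow_mul_τ_inv : τ p q * a p q ^ p * (τ p q)⁻¹ = (x p q 0)⁻¹ * a p q ^ p := by
  have hτa : τ p q * a p q * (τ p q)⁻¹ = x p q 0 ^ q * x p q 1 ^ (-q) := by
    rw [a, ← MulAut.conj_apply, map_mul, map_zpow, map_zpow, MulAut.conj_apply,
      MulAut.conj_apply, τ_mul_x_mul_τ_inv, τ_mul_x_mul_τ_inv]
    norm_num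
  have hx₁ : x p q 1 ^ (-(p * q)) = x p q 0 ^ (-(2 * p * q + 1)) * x p q (-1) ^ (p * q) := by
    have h := x_recurrence p q 0
    rw [zero_add, zero_sub, mul_assoc] at h
    rw [zpow_neg, eq_inv_of_mul_eq_one_right h]
  rw [← conj_zpow, hτa, a, (commute_x p q 0 1).zpow_mul_zpow_neg_zpow,
    (commute_x p q (-1) 0).zpow_mul_zpow_neg_zpow, hx₁,
    ((commute_x p q (-1) 0).zpow_zpow _ _).eq]
  group

theorem τ_mul_x_zpow_mul_a_inv_mul_τ_inv :
    τ p q * x p q 0 ^ (-q) * (a p q)⁻¹ * (τ p q)⁻¹ = x p q 0 ^ (-q) :=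
  calc _ = τ p q * x p q (-1) ^ (-q) * (τ p q)⁻¹ := by
        rw [a]
        group
    _ = x p q 0 ^ (-q) := by
        rw [← conj_zpow, τ_mul_x_mul_τ_inv, neg_add_cancel]

theorem commute_x_zpow_a_zpow : Commute (x p q 0 ^ q) (a p q ^ p) :=
  (((commute_x p q 0 (-1)).zpow_right q).mul_right
    ((Commute.refl _).zpow_right (-q))).zpow_zpow q p

end Hpq

section Isomorphism

variable {p q : ℤ} (hG : ¬ HasGenTorsion (Gpq p q)) (hp : p ≠ 0) (hq : q ≠ 0)

def Hpq.toGpq : Hpq p q →* Gpq p q :=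
  PresentedGroup.toGroup (Hpq.lift_eq_one_of_rels p q (Gpq.commute_bConj hG hp hq)
    (Gpq.bConj_recurrence hG hp hq) (Gpq.t_mul_bConj_mul_t_inv p q))

def Gpq.toHpq : Gpq p q →* Hpq p q :=
  PresentedGroup.toGroup (Gpq.lift_eq_one_of_rels p q (Hpq.τ_mul_a_zpow_mul_τ_inv p q)
    (Hpq.τ_mul_x_zpow_mul_a_inv_mul_τ_inv p q) (Hpq.commute_x_zpow_a_zpow p q))

theorem Hpq.toGpq_τ : Hpq.toGpq hG hp hq (Hpq.τ p q) = Gpq.t p q := PresentedGroup.toGroup.of _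

theorem Hpq.toGpq_x (n : ℤ) : Hpq.toGpq hG hp hq (Hpq.x p q n) = Gpq.bConj p q n :=
  PresentedGroup.toGroup.of _

theorem Gpq.toHpq_a : Gpq.toHpq (Gpq.a p q) = Hpq.a p q := PresentedGroup.toGroup.of _

theorem Gpq.toHpq_b : Gpq.toHpq (Gpq.b p q) = Hpq.x p q 0 := PresentedGroup.toGroup.of _

theorem Gpq.toHpq_t : Gpq.toHpq (Gpq.t p q) = Hpq.τ p q := PresentedGroup.toGroup.of _

theorem Gpq.toHpq_comp_toGpq : Gpq.toHpq.comp (Hpq.toGpq hG hp hq) = MonoidHom.id (Hpq p q) := by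
  refine PresentedGroup.ext ?_
  rintro (⟨⟩ | n)
  · show Gpq.toHpq (Hpq.toGpq hG hp hq (Hpq.τ p q)) = Hpq.τ p q
    rw [Hpq.toGpq_τ, Gpq.toHpq_t]
  · show Gpq.toHpq (Hpq.toGpq hG hp hq (Hpq.x p q n)) = Hpq.x p q n
    rw [Hpq.toGpq_x, Gpq.bConj, MonoidHom.map_mulAut_conj_zpow_apply, Gpq.toHpq_t, Gpq.toHpq_b,
      Hpq.conj_zpow_x, add_zero]

theorem Hpq.toGpq_comp_toHpq : (Hpq.toGpq hG hp hq).comp Gpq.toHpq = MonoidHom.id (Gpq p q) := by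
  refine PresentedGroup.ext ?_
  intro i
  fin_cases i
  · show Hpq.toGpq hG hp hq (Gpq.toHpq (Gpq.a p q)) = Gpq.a p q
    have h := Gpq.aConj_succ_eq_bConj_zpow_mul p q (-1)
    rw [neg_add_cancel, Gpq.aConj_zero] at h
    rw [Gpq.toHpq_a, Hpq.a, map_mul, map_zpow, map_zpow, Hpq.toGpq_x, Hpq.toGpq_x, h]
  · show Hpq.toGpq hG hp hq (Gpq.toHpq (Gpq.b p q)) = Gpq.b p q
    rw [Gpq.toHpq_b, Hpq.toGpq_x, Gpq.bConj_zero]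
  · show Hpq.toGpq hG hp hq (Gpq.toHpq (Gpq.t p q)) = Gpq.t p q
    rw [Gpq.toHpq_t, Hpq.toGpq_τ]

def Hpq.mulEquivGpq : Hpq p q ≃* Gpq p q :=
  MonoidHom.toMulEquiv _ _ (Gpq.toHpq_comp_toGpq hG hp hq) (Hpq.toGpq_comp_toHpq hG hp hq)

end Isomorphism

/-- if `p, q > 0` and `G_{p,q}` has no generalized torsion elements, then
there is an isomorphism `H_{p,q} ≃* G_{p,q}` sending `τ` to `t` and `x_n` to
`t^n b t^{-n}` for every `n`. -/
theorem hpq_iso_gpq (p q : ℤ) (hp : 0 < p) (hq : 0 < q)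
    (hng : ¬ HasGenTorsion (Gpq p q)) :
    letI b : Gpq p q := PresentedGroup.of 1
    letI t : Gpq p q := PresentedGroup.of 2
    ∃ φ : Hpq p q ≃* Gpq p q,
      φ (PresentedGroup.of (Sum.inl ())) = t ∧
      ∀ n : ℤ, φ (PresentedGroup.of (Sum.inr n)) = t ^ n * b * t ^ (-n) := by
  refine ⟨Hpq.mulEquivGpq hng hp.ne' hq.ne', Hpq.toGpq_τ hng hp.ne' hq.ne', fun n => ?_⟩
  exact (Hpq.toGpq_x hng hp.ne' hq.ne' n).trans (Gpq.bConj_eq_zpow_mul_mul_zpow_neg p q n)
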